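/- arXiv:math-ph/0702023 — 2 statements merged into one kernel-verified Lean document; each statement's English description precedes it below -/
import Mathlib

section
/- For every $p \geq 3$, $\delta > 0$, and $g_p \in L^2((0,\delta), r\,dr)$, one has $\int_0^\delta r^{-2p-4}\left(\int_0^r t^{p+3/2} g_p(t)\,dt\right)^2 dr \leq \frac{4}{(2p+7)(2p-1)} \int_0^\delta r\, |g_p(r)|^2\, dr$. -/
/-!
Put `q = p + 1/2`, so that the inner integrand is `t ^ (q + 1) * g t` and the weight is
`r ^ (-2q-3)`. Cauchy–Schwarz against `t ^ ((q+2)/2)` gives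
`(∫₀ʳ t^(q+1) g)² ≤ r^(q+3)/(q+3) · ∫₀ʳ t^q g²`, so the left side is at most
`1/(q+3) · ∫₀^δ r^(-q) ∫₀ʳ t^q g² dt dr`. Exchanging the order of integration and using
`∫_t^∞ r^(-q) dr = t^(1-q)/(q-1)` bounds this by `1/((q-1)(q+3)) · ∫₀^δ t g²`, and
`4 (q-1)(q+3) = (2p-1)(2p+7)`. The estimates are carried out in `ℝ≥0∞`, where Tonelli and
Hölder need no integrability; only the last step returns to `ℝ`.
-/

open MeasureTheory Set
open scoped ENNReal

theorem ENNReal.sq_lintegral_mul_le {α : Type*} [MeasurableSpace α] {μ : Measure α}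
    {f g : α → ℝ≥0∞} (hf : AEMeasurable f μ) (hg : AEMeasurable g μ) :
    (∫⁻ a, f a * g a ∂μ) ^ 2 ≤ (∫⁻ a, f a ^ 2 ∂μ) * ∫⁻ a, g a ^ 2 ∂μ := by
  have h := ENNReal.lintegral_mul_le_Lp_mul_Lq μ Real.HolderConjugate.two_two hf hg
  simp only [Pi.mul_apply, ENNReal.rpow_two] at h
  calc _ ≤ ((∫⁻ a, f a ^ 2 ∂μ) ^ (1 / 2 : ℝ) * (∫⁻ a, g a ^ 2 ∂μ) ^ (1 / 2 : ℝ)) ^ 2 := by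
        gcongr
    _ = _ := by
        rw [mul_pow, ← ENNReal.rpow_two, ← ENNReal.rpow_two, ← ENNReal.rpow_mul,
          ← ENNReal.rpow_mul]
        norm_num

theorem lintegral_Ioo_zero_rpow {a r : ℝ} (ha : -1 < a) (hr : 0 < r) :
    ∫⁻ t in Ioo 0 r, ENNReal.ofReal (t ^ a) = ENNReal.ofReal (r ^ (a + 1) / (a + 1)) := by
  rw [← ofReal_integral_eq_lintegral_ofReal
      ((intervalIntegral.integrableOn_Ioo_rpow_iff hr).mpr ha)
      ((ae_restrict_mem measurableSet_Ioo).mono fun t ht => Real.rpow_nonneg ht.1.le a),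
    ← integral_Ioc_eq_integral_Ioo, ← intervalIntegral.integral_of_le hr.le,
    integral_rpow (.inl ha), Real.zero_rpow (by linarith), sub_zero]

theorem lintegral_Ioi_rpow_of_lt {a t : ℝ} (ha : a < -1) (ht : 0 < t) :
    ∫⁻ r in Ioi t, ENNReal.ofReal (r ^ a) = ENNReal.ofReal (-t ^ (a + 1) / (a + 1)) := by
  rw [← integral_Ioi_rpow_of_lt ha ht, ofReal_integral_eq_lintegral_ofReal
    (integrableOn_Ioi_rpow_of_lt ha ht)
    ((ae_restrict_mem measurableSet_Ioi).mono fun r hr => Real.rpow_nonneg (ht.trans hr).le a)]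

theorem lintegral_Ioo_mul_lintegral_Ioo_comm {a b : ℝ} {w G : ℝ → ℝ≥0∞}
    (hw : Measurable w) (hG : Measurable G) :
    ∫⁻ r in Ioo a b, w r * ∫⁻ t in Ioo a r, G t
      = ∫⁻ t in Ioo a b, G t * ∫⁻ r in Ioo t b, w r := by
  set F : ℝ × ℝ → ℝ≥0∞ := {x | x.2 < x.1}.indicator fun x => w x.1 * G x.2
  have hF : Measurable F :=
    ((hw.comp measurable_fst).mul (hG.comp measurable_snd)).indicator
      (measurableSet_lt measurable_snd measurable_fst)
  have hinner : ∀ r ∈ Ioo a b, w r * ∫⁻ t in Ioo a r, G t = ∫⁻ t in Ioo a b, F (r, t) := by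
    intro r hr
    have : ∀ t, F (r, t) = (Iio r).indicator (fun t => w r * G t) t := fun t => by
      simp [F, indicator_apply]
    simp_rw [this]
    rw [lintegral_indicator measurableSet_Iio, Measure.restrict_restrict measurableSet_Iio,
      Iio_inter_Ioo, min_eq_left hr.2.le, lintegral_const_mul _ hG]
  have houter : ∀ t ∈ Ioo a b, G t * ∫⁻ r in Ioo t b, w r = ∫⁻ r in Ioo a b, F (r, t) := by
    intro t ht
    have : ∀ r, F (r, t) = (Ioi t).indicator (fun r => G t * w r) r := fun r => by
      simp [F, indicator_apply, mul_comm]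
    simp_rw [this]
    rw [lintegral_indicator measurableSet_Ioi, Measure.restrict_restrict measurableSet_Ioi,
      Ioi_inter_Ioo, max_eq_left ht.1.le, lintegral_const_mul _ hw]
  rw [setLIntegral_congr_fun measurableSet_Ioo hinner,
    setLIntegral_congr_fun measurableSet_Ioo houter]
  exact lintegral_lintegral_swap hF.aemeasurable

theorem lintegral_rpow_neg_mul_lintegral_Ioo_le {q δ : ℝ} (hq : 1 < q) {G : ℝ → ℝ≥0∞}
    (hG : Measurable G) :
    ∫⁻ r in Ioo 0 δ, ENNReal.ofReal (r ^ (-q)) * ∫⁻ t in Ioo 0 r, G t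
      ≤ ∫⁻ t in Ioo 0 δ, G t * ENNReal.ofReal (t ^ (1 - q) / (q - 1)) := by
  rw [lintegral_Ioo_mul_lintegral_Ioo_comm (by fun_prop) hG]
  refine setLIntegral_mono' measurableSet_Ioo fun t ht => ?_
  gcongr
  calc ∫⁻ r in Ioo t δ, ENNReal.ofReal (r ^ (-q))
      ≤ ∫⁻ r in Ioi t, ENNReal.ofReal (r ^ (-q)) := lintegral_mono_set Ioo_subset_Ioi_self
    _ = ENNReal.ofReal (t ^ (1 - q) / (q - 1)) := by
      rw [lintegral_Ioi_rpow_of_lt (by linarith) ht.1, show -q + 1 = 1 - q by ring, neg_div,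
        ← div_neg, neg_sub]

theorem enorm_setIntegral_Ioo_rpow_mul_sq_le {q r : ℝ} (hq : -3 < q) (hr : 0 < r) {g : ℝ → ℝ}
    (hg : Measurable g) :
    ‖∫ t in Ioo 0 r, t ^ (q + 1) * g t‖ₑ ^ 2
      ≤ ENNReal.ofReal (r ^ (q + 3) / (q + 3))
        * ∫⁻ t in Ioo 0 r, ENNReal.ofReal (t ^ q * g t ^ 2) := by
  have hsq : ∀ t ∈ Ioo (0 : ℝ) r, ∀ a : ℝ, (t ^ (a / 2)) ^ 2 = t ^ a := fun t ht a => by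
    rw [← Real.rpow_natCast, ← Real.rpow_mul ht.1.le]; norm_num
  have hsplit : ∀ t ∈ Ioo (0 : ℝ) r,
      ‖t ^ (q + 1) * g t‖ₑ = ‖t ^ ((q + 2) / 2)‖ₑ * ‖t ^ (q / 2) * g t‖ₑ := fun t ht => by
    rw [← enorm_mul, ← mul_assoc, ← Real.rpow_add ht.1]; ring_nf
  calc ‖∫ t in Ioo 0 r, t ^ (q + 1) * g t‖ₑ ^ 2
      ≤ (∫⁻ t in Ioo 0 r, ‖t ^ (q + 1) * g t‖ₑ) ^ 2 := by
        gcongr; exact enorm_integral_le_lintegral_enorm _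
    _ = (∫⁻ t in Ioo 0 r, ‖t ^ ((q + 2) / 2)‖ₑ * ‖t ^ (q / 2) * g t‖ₑ) ^ 2 := by
        rw [setLIntegral_congr_fun measurableSet_Ioo hsplit]
    _ ≤ (∫⁻ t in Ioo 0 r, ‖t ^ ((q + 2) / 2)‖ₑ ^ 2)
          * ∫⁻ t in Ioo 0 r, ‖t ^ (q / 2) * g t‖ₑ ^ 2 :=
        ENNReal.sq_lintegral_mul_le (by fun_prop) (by fun_prop)
    _ = _ := by
        rw [show q + 3 = q + 2 + 1 by ring, ← lintegral_Ioo_zero_rpow (by linarith) hr]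
        congr 1 <;> refine setLIntegral_congr_fun measurableSet_Ioo fun t ht => ?_
        · rw [← enorm_pow, hsq t ht, Real.enorm_of_nonneg (Real.rpow_nonneg ht.1.le _)]
        · rw [← enorm_pow, mul_pow, hsq t ht,
            Real.enorm_of_nonneg (mul_nonneg (Real.rpow_nonneg ht.1.le _) (sq_nonneg _))]

theorem enorm_rpow_mul_sq_setIntegral_Ioo_le {q r : ℝ} (hq : -3 < q) (hr : 0 < r) {g : ℝ → ℝ}
    (hg : Measurable g) :
    ‖r ^ (-2 * q - 3) * (∫ t in Ioo 0 r, t ^ (q + 1) * g t) ^ 2‖ₑ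
      ≤ ENNReal.ofReal (1 / (q + 3))
        * (ENNReal.ofReal (r ^ (-q)) * ∫⁻ t in Ioo 0 r, ENNReal.ofReal (t ^ q * g t ^ 2)) := by
  rw [enorm_mul, enorm_pow, Real.enorm_of_nonneg (Real.rpow_nonneg hr.le _)]
  calc _ ≤ ENNReal.ofReal (r ^ (-2 * q - 3)) * (ENNReal.ofReal (r ^ (q + 3) / (q + 3))
        * ∫⁻ t in Ioo 0 r, ENNReal.ofReal (t ^ q * g t ^ 2)) := by
        gcongr; exact enorm_setIntegral_Ioo_rpow_mul_sq_le hq hr hg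
    _ = _ := by
        rw [← mul_assoc, ← mul_assoc, ← ENNReal.ofReal_mul (Real.rpow_nonneg hr.le _),
          ← ENNReal.ofReal_mul (div_nonneg zero_le_one (by linarith)), mul_div_assoc',
          ← Real.rpow_add hr]
        ring_nf

theorem integral_le_of_lintegral_enorm_le {α : Type*} [MeasurableSpace α] {μ : Measure α}
    {f : α → ℝ} {b : ℝ} (hb : 0 ≤ b) (h : ∫⁻ a, ‖f a‖ₑ ∂μ ≤ ENNReal.ofReal b) :
    ∫ a, f a ∂μ ≤ b :=
  calc ∫ a, f a ∂μ ≤ ‖∫ a, f a ∂μ‖ := Real.le_norm_self _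
    _ = ‖∫ a, f a ∂μ‖ₑ.toReal := (toReal_enorm _).symm
    _ ≤ b := ENNReal.toReal_le_of_le_ofReal hb ((enorm_integral_le_lintegral_enorm _).trans h)

theorem setIntegral_rpow_mul_sq_setIntegral_Ioo_le {q δ : ℝ} (hq : 1 < q) {g : ℝ → ℝ}
    (hg : Measurable g) (hint : IntegrableOn (fun r => r * g r ^ 2) (Ioo 0 δ)) :
    ∫ r in Ioo 0 δ, r ^ (-2 * q - 3) * (∫ t in Ioo 0 r, t ^ (q + 1) * g t) ^ 2
      ≤ 1 / ((q - 1) * (q + 3)) * ∫ r in Ioo 0 δ, r * g r ^ 2 := by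
  set G : ℝ → ℝ≥0∞ := fun t => ENNReal.ofReal (t ^ q * g t ^ 2)
  have hG : Measurable G := by fun_prop
  have hweight : ∀ t ∈ Ioo 0 δ,
      G t * ENNReal.ofReal (t ^ (1 - q) / (q - 1)) = ENNReal.ofReal (t * g t ^ 2 / (q - 1)) := by
    intro t ht
    rw [← ENNReal.ofReal_mul (mul_nonneg (Real.rpow_nonneg ht.1.le _) (sq_nonneg _)),
      mul_div_assoc', mul_right_comm, ← Real.rpow_add ht.1, add_sub_cancel, Real.rpow_one]
  refine integral_le_of_lintegral_enorm_le (mul_nonneg (div_nonneg zero_le_one (by nlinarith))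
    (setIntegral_nonneg measurableSet_Ioo fun r hr => mul_nonneg hr.1.le (sq_nonneg _))) ?_
  calc _ ≤ ∫⁻ r in Ioo 0 δ,
        ENNReal.ofReal (1 / (q + 3)) * (ENNReal.ofReal (r ^ (-q)) * ∫⁻ t in Ioo 0 r, G t) :=
        setLIntegral_mono' measurableSet_Ioo fun r hr =>
          enorm_rpow_mul_sq_setIntegral_Ioo_le (by linarith) hr.1 hg
    _ = ENNReal.ofReal (1 / (q + 3))
        * ∫⁻ r in Ioo 0 δ, ENNReal.ofReal (r ^ (-q)) * ∫⁻ t in Ioo 0 r, G t :=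
        lintegral_const_mul' _ _ ENNReal.ofReal_ne_top
    _ ≤ ENNReal.ofReal (1 / (q + 3))
        * ∫⁻ t in Ioo 0 δ, G t * ENNReal.ofReal (t ^ (1 - q) / (q - 1)) := by
        gcongr ENNReal.ofReal (1 / (q + 3)) * ?_
        exact lintegral_rpow_neg_mul_lintegral_Ioo_le hq hG
    _ = ENNReal.ofReal (1 / (q + 3)) * ENNReal.ofReal (∫ t in Ioo 0 δ, t * g t ^ 2 / (q - 1)) := by
        rw [setLIntegral_congr_fun measurableSet_Ioo hweight,
          ofReal_integral_eq_lintegral_ofReal (hint.div_const _)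
            ((ae_restrict_mem measurableSet_Ioo).mono fun t ht =>
              div_nonneg (mul_nonneg ht.1.le (sq_nonneg _)) (by linarith))]
    _ = _ := by
        rw [← ENNReal.ofReal_mul (by positivity), integral_div]
        congr 1
        field_simp

theorem stmt_0_general (p : ℝ) (hp : 3 ≤ p) (δ : ℝ)
    (g : ℝ → ℝ) (hmeas : Measurable g)
    (hint : IntegrableOn (fun r => r * (g r) ^ 2) (Ioo 0 δ)) :
    ∫ r in Ioo 0 δ, r ^ (-2 * p - 4) * (∫ t in Ioo 0 r, t ^ (p + 3 / 2) * g t) ^ 2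
      ≤ 4 / ((2 * p + 7) * (2 * p - 1)) * ∫ r in Ioo 0 δ, r * (g r) ^ 2 := by
  have h := setIntegral_rpow_mul_sq_setIntegral_Ioo_le (q := p + 1 / 2) (by linarith) hmeas hint
  have hC : 1 / ((p + 1 / 2 - 1) * (p + 1 / 2 + 3)) = 4 / ((2 * p + 7) * (2 * p - 1)) := by
    rw [div_eq_div_iff (by nlinarith) (by nlinarith)]
    ring
  rwa [show -2 * (p + 1 / 2) - 3 = -2 * p - 4 by ring, show p + 1 / 2 + 1 = p + 3 / 2 by ring,
    hC] at h

/-- Weighted Hardy-type inequality (STATEMENT 0). -/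
theorem stmt_0 (p : ℝ) (hp : 3 ≤ p) (δ : ℝ) (hδ : 0 < δ)
    (g : ℝ → ℝ) (hmeas : Measurable g)
    (hint : IntegrableOn (fun r => r * (g r) ^ 2) (Ioo 0 δ)) :
    ∫ r in Ioo 0 δ, r ^ (-2 * p - 4) * (∫ t in Ioo 0 r, t ^ (p + 3 / 2) * g t) ^ 2
      ≤ 4 / ((2 * p + 7) * (2 * p - 1)) * ∫ r in Ioo 0 δ, r * (g r) ^ 2 :=
  stmt_0_general p hp δ g hmeas hint
end

section
/- Let $N > 0$, $\delta > 0$, and let $g_0 \in L^2((0,\delta), t\,dt)$. Define $\alpha := \int_0^\delta \sqrt{t}\, \frac{\sinh N(t - \delta)}{\sinh N\delta}\, g_0(t)\, dt$. Then $|\alpha|^2 \leq \frac{C}{N} \int_0^\delta t\, |g_0(t)|^2\, dt$, where $C = \sup_{t>0} \frac{\sinh 2t - 2t}{4\sinh^2 t} < \infty$ is independent of $N$, $\delta$, and $g_0$. -/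
/-!
Write the integrand as `h t · (√t g₀ t)` with `h t = sinh (N (t - δ)) / sinh (N δ)` and apply
Cauchy–Schwarz. Since `sinh² x = (cosh 2x - 1) / 2`, the integral of `h²` over `(0, δ)` is exactly
`(sinh 2Nδ - 2Nδ) / (4 sinh² Nδ) / N`, i.e. the ratio in the supremum evaluated at `t = Nδ`,
divided by `N`.
-/

open MeasureTheory Set Real

theorem sq_integral_mul_le_integral_sq_mul_integral_sq {α : Type*} [MeasurableSpace α]
    {μ : Measure α} {f g : α → ℝ} (hf : Integrable (fun x => f x ^ 2) μ)
    (hg : Integrable (fun x => g x ^ 2) μ) :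
    (∫ x, f x * g x ∂μ) ^ 2 ≤ (∫ x, f x ^ 2 ∂μ) * ∫ x, g x ^ 2 ∂μ := by
  by_cases hfg : Integrable (fun x => f x * g x) μ
  swap
  · rw [integral_undef hfg, sq, zero_mul]
    exact mul_nonneg (integral_nonneg fun _ => sq_nonneg _) (integral_nonneg fun _ => sq_nonneg _)
  -- the quadratic `s ↦ ∫ (s f + g)²` is nonnegative, so its discriminant is nonpositive
  have hquad : ∀ s : ℝ, 0 ≤ (∫ x, f x ^ 2 ∂μ) * (s * s) + (2 * ∫ x, f x * g x ∂μ) * s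
      + ∫ x, g x ^ 2 ∂μ := fun s => by
    have hexpand : (fun x => (s * f x + g x) ^ 2)
        = fun x => s * s * f x ^ 2 + 2 * s * (f x * g x) + g x ^ 2 := by
      funext x; ring
    have hnonneg : 0 ≤ ∫ x, (s * f x + g x) ^ 2 ∂μ := integral_nonneg fun _ => sq_nonneg _
    have hfirst : Integrable (fun x => s * s * f x ^ 2 + 2 * s * (f x * g x)) μ :=
      (hf.const_mul _).add (hfg.const_mul _)
    rw [hexpand, integral_add hfirst hg,
      integral_add (hf.const_mul _) (hfg.const_mul _), integral_const_mul,
      integral_const_mul] at hnonneg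
    linarith
  have hdisc := discrim_le_zero hquad
  rw [discrim] at hdisc
  nlinarith

theorem sinh_two_mul_sub_two_mul_le (t : ℝ) : sinh (2 * t) - 2 * t ≤ 2 * sinh t ^ 2 := by
  -- `2 sinh² t = cosh 2t - 1` and `cosh 2t - sinh 2t = exp (-2t) ≥ 1 - 2t`
  nlinarith [add_one_le_exp (-(2 * t)), cosh_sub_sinh (2 * t), cosh_two_mul t, cosh_sq t]

theorem bddAbove_sinh_edge_ratio :
    BddAbove {y : ℝ | ∃ t > 0, y = (sinh (2 * t) - 2 * t) / (4 * sinh t ^ 2)} := by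
  refine ⟨1 / 2, ?_⟩
  rintro y ⟨t, ht, rfl⟩
  have : 0 < sinh t := sinh_pos_iff.mpr ht
  rw [div_le_iff₀ (by positivity)]
  linarith [sinh_two_mul_sub_two_mul_le t]

theorem integral_sinh_sq (a b : ℝ) :
    ∫ x in a..b, sinh x ^ 2 = (sinh (2 * b) - sinh (2 * a)) / 4 - (b - a) / 2 := by
  have hderiv : ∀ x ∈ uIcc a b, HasDerivAt (fun x => sinh (2 * x) / 4 - x / 2) (sinh x ^ 2) x := by
    intro x _
    have h := ((((hasDerivAt_id x).const_mul 2).sinh.div_const 4).sub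
      ((hasDerivAt_id x).div_const 2))
    simp only [id, mul_one] at h
    refine h.congr_deriv ?_
    rw [cosh_two_mul, cosh_sq]
    ring
  rw [intervalIntegral.integral_eq_sub_of_hasDerivAt hderiv
    ((continuous_sinh.pow 2).intervalIntegrable a b)]
  ring

theorem integral_sq_sinh_mul_sub_div {N : ℝ} (hN : N ≠ 0) (δ : ℝ) :
    ∫ t in 0..δ, (sinh (N * (t - δ)) / sinh (N * δ)) ^ 2
      = (sinh (2 * (N * δ)) - 2 * (N * δ)) / (4 * sinh (N * δ) ^ 2) / N := by
  simp_rw [div_pow, intervalIntegral.integral_div, mul_sub,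
    intervalIntegral.integral_comp_mul_sub (fun x => sinh x ^ 2) hN, integral_sinh_sq]
  simp only [mul_zero, zero_sub, sub_self, mul_neg, sinh_neg, sinh_zero, smul_eq_mul]
  field_simp
  ring

theorem stmt_6_general (N δ : ℝ) (hN : 0 < N) (hδ : 0 < δ) (g0 : ℝ → ℝ)
    (hint : IntegrableOn (fun t => t * (g0 t) ^ 2) (Ioo 0 δ)) :
    BddAbove {y : ℝ | ∃ t > 0, y = (Real.sinh (2 * t) - 2 * t) / (4 * Real.sinh t ^ 2)} ∧
    (∫ t in Ioo 0 δ, Real.sqrt t * (Real.sinh (N * (t - δ)) / Real.sinh (N * δ)) * g0 t) ^ 2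
      ≤ (sSup {y : ℝ | ∃ t > 0, y = (Real.sinh (2 * t) - 2 * t) / (4 * Real.sinh t ^ 2)}) / N
          * ∫ t in Ioo 0 δ, t * (g0 t) ^ 2 := by
  refine ⟨bddAbove_sinh_edge_ratio, ?_⟩
  set h : ℝ → ℝ := fun t => sinh (N * (t - δ)) / sinh (N * δ)
  have hcont : Continuous h := by fun_prop
  have hsqrt : ∀ t ∈ Ioo 0 δ, (√t * g0 t) ^ 2 = t * g0 t ^ 2 := fun t ht => by
    rw [mul_pow, sq_sqrt ht.1.le]
  have hg2 : IntegrableOn (fun t => (√t * g0 t) ^ 2) (Ioo 0 δ) :=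
    hint.congr_fun (fun t ht => (hsqrt t ht).symm) measurableSet_Ioo
  have hh2 : ∫ t in Ioo 0 δ, h t ^ 2
      = (sinh (2 * (N * δ)) - 2 * (N * δ)) / (4 * sinh (N * δ) ^ 2) / N := by
    rw [← integral_Ioc_eq_integral_Ioo, ← intervalIntegral.integral_of_le hδ.le,
      integral_sq_sinh_mul_sub_div hN.ne']
  calc (∫ t in Ioo 0 δ, √t * h t * g0 t) ^ 2
      = (∫ t in Ioo 0 δ, h t * (√t * g0 t)) ^ 2 := by congr 2; ext t; ring
    _ ≤ (∫ t in Ioo 0 δ, h t ^ 2) * ∫ t in Ioo 0 δ, (√t * g0 t) ^ 2 :=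
      sq_integral_mul_le_integral_sq_mul_integral_sq
        ((hcont.pow 2).integrableOn_Ioc.mono_set Ioo_subset_Ioc_self) hg2
    _ ≤ _ := by
      rw [hh2, setIntegral_congr_fun measurableSet_Ioo hsqrt]
      gcongr
      · exact integral_nonneg_of_ae (ae_restrict_of_forall_mem measurableSet_Ioo
          fun t ht => mul_nonneg ht.1.le (sq_nonneg _))
      · exact le_csSup bddAbove_sinh_edge_ratio ⟨N * δ, mul_pos hN hδ, rfl⟩

/-- Bound on the edge coefficient of the N-th Fourier mode (STATEMENT 6). -/
theorem stmt_6 (N δ : ℝ) (hN : 0 < N) (hδ : 0 < δ) (g0 : ℝ → ℝ) (hmeas : Measurable g0)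
    (hint : IntegrableOn (fun t => t * (g0 t) ^ 2) (Ioo 0 δ)) :
    BddAbove {y : ℝ | ∃ t > 0, y = (Real.sinh (2 * t) - 2 * t) / (4 * Real.sinh t ^ 2)} ∧
    (∫ t in Ioo 0 δ, Real.sqrt t * (Real.sinh (N * (t - δ)) / Real.sinh (N * δ)) * g0 t) ^ 2
      ≤ (sSup {y : ℝ | ∃ t > 0, y = (Real.sinh (2 * t) - 2 * t) / (4 * Real.sinh t ^ 2)}) / N
          * ∫ t in Ioo 0 δ, t * (g0 t) ^ 2 :=
  stmt_6_general N δ hN hδ g0 hint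
end
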